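/- arXiv:2403.05734 — 7 statements merged into one kernel-verified Lean document; each statement's English description precedes it below -/
import Mathlib

section
/- Let a ∈ ℝ², let b lie on the guide line through a of slope 1 (i.e., b₂ - a₂ = b₁ - a₁) and let c lie on the guide line through a of slope -1 (i.e., c₂ - a₂ = -(c₁ - a₁)). Then for every x ∈ ℝ², d(x,a) ≤ d(x,b) or d(x,a) ≤ d(x,c). -/
noncomputable def taxi (a b : ℝ × ℝ) : ℝ := |a.1 - b.1| + |a.2 - b.2|

noncomputable def gplus (p q : ℝ × ℝ) : ℝ × ℝ :=
  ((p.1 - p.2 + q.1 + q.2) / 2, (q.1 + q.2 - p.1 + p.2) / 2)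

noncomputable def gminus (p q : ℝ × ℝ) : ℝ × ℝ :=
  ((p.1 + p.2 + q.1 - q.2) / 2, (p.1 + p.2 - q.1 + q.2) / 2)

def Lset (a b : ℝ × ℝ) (r : ℝ) : Set (ℝ × ℝ) := {x | taxi x a * taxi x b < r ^ 2}

def Kset (a b : ℝ × ℝ) (r : ℝ) : Set (ℝ × ℝ) := {x | taxi x a * taxi x b = r ^ 2}
theorem guide_H_lemma (a b c : ℝ × ℝ)
    (hb : b.2 - a.2 = b.1 - a.1) (hc : c.2 - a.2 = -(c.1 - a.1)) :
    ∀ x : ℝ × ℝ, taxi x a ≤ taxi x b ∨ taxi x a ≤ taxi x c := by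
  intro x
  simp only [taxi]
  rcases le_total (|x.1 - a.1 + (x.2 - a.2)|) (|x.1 - a.1 - (x.2 - a.2)|) with h | h
  · left
    have h1 : |x.1 - a.1| + |x.2 - a.2| ≤ |x.1 - a.1 - (x.2 - a.2)| := by
      rcases abs_cases (x.1 - a.1 + (x.2 - a.2)) with ⟨e1, _⟩ | ⟨e1, _⟩ <;>
        rcases abs_cases (x.1 - a.1 - (x.2 - a.2)) with ⟨e2, _⟩ | ⟨e2, _⟩ <;>
        rcases abs_cases (x.1 - a.1) with ⟨e3, _⟩ | ⟨e3, _⟩ <;>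
        rcases abs_cases (x.2 - a.2) with ⟨e4, _⟩ | ⟨e4, _⟩ <;> linarith
    have h2 : |x.1 - a.1 - (x.2 - a.2)| ≤ |x.1 - b.1| + |x.2 - b.2| := by
      have : |x.1 - b.1 - (x.2 - b.2)| ≤ |x.1 - b.1| + |x.2 - b.2| := abs_sub _ _
      have he : x.1 - a.1 - (x.2 - a.2) = x.1 - b.1 - (x.2 - b.2) := by linarith
      rw [he]; exact this
    linarith
  · right
    have h1 : |x.1 - a.1| + |x.2 - a.2| ≤ |x.1 - a.1 + (x.2 - a.2)| := by
      rcases abs_cases (x.1 - a.1 + (x.2 - a.2)) with ⟨e1, _⟩ | ⟨e1, _⟩ <;>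
        rcases abs_cases (x.1 - a.1 - (x.2 - a.2)) with ⟨e2, _⟩ | ⟨e2, _⟩ <;>
        rcases abs_cases (x.1 - a.1) with ⟨e3, _⟩ | ⟨e3, _⟩ <;>
        rcases abs_cases (x.2 - a.2) with ⟨e4, _⟩ | ⟨e4, _⟩ <;> linarith
    have h2 : |x.1 - a.1 + (x.2 - a.2)| ≤ |x.1 - c.1| + |x.2 - c.2| := by
      have : |x.1 - c.1 + (x.2 - c.2)| ≤ |x.1 - c.1| + |x.2 - c.2| := abs_add_le _ _
      have he : x.1 - a.1 + (x.2 - a.2) = x.1 - c.1 + (x.2 - c.2) := by linarith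
      rw [he]; exact this
    linarith
end

section
/- Let p, q ∈ ℝ² with r > 0, and let K(p,q;r) = {x : d(x,p)·d(x,q) = r²} and L(p,q;r) = {x : d(x,p)·d(x,q) < r²}, where d is the taxicab distance. Then the topological boundary of L(p,q;r) equals K(p,q;r). -/
lemma taxi_nonneg (a b : ℝ × ℝ) : 0 ≤ taxi a b :=
  add_nonneg (abs_nonneg _) (abs_nonneg _)

lemma step (u v ε : ℝ) (hε0 : 0 < ε) (hεc : ε ≤ |u - v|) :
    ∃ w : ℝ, |u - w| = ε ∧ |w - v| = |u - v| - ε ∧ ∀ z, |w - z| ≤ |u - z| + ε := by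
  rcases le_or_gt v u with h | h
  · rw [abs_of_nonneg (by linarith)] at hεc
    refine ⟨u - ε, ?_, ?_, fun z => ?_⟩
    · rw [show u - (u - ε) = ε by ring, abs_of_pos hε0]
    · rw [abs_of_nonneg (by linarith), abs_of_nonneg (by linarith)]; ring
    · calc |u - ε - z| = |(u - z) + (-ε)| := by ring_nf
        _ ≤ |u - z| + |(-ε)| := abs_add_le _ _
        _ = |u - z| + ε := by rw [abs_neg, abs_of_pos hε0]
  · rw [abs_of_nonpos (by linarith)] at hεc
    refine ⟨u + ε, ?_, ?_, fun z => ?_⟩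
    · rw [show u - (u + ε) = -ε by ring, abs_neg, abs_of_pos hε0]
    · rw [abs_of_nonpos (by linarith), abs_of_nonpos (by linarith)]; ring
    · calc |u + ε - z| = |(u - z) + ε| := by ring_nf
        _ ≤ |u - z| + |ε| := abs_add_le _ _
        _ = |u - z| + ε := by rw [abs_of_pos hε0]

lemma key (p q x : ℝ × ℝ) (hba : taxi x q ≤ taxi x p) (hb : 0 < taxi x q)
    (δ : ℝ) (hδ : 0 < δ) :
    ∃ y : ℝ × ℝ, dist x y < δ ∧ taxi y p * taxi y q < taxi x p * taxi x q := by
  have hc : 0 < |x.1 - q.1| ∨ 0 < |x.2 - q.2| := by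
    by_contra h
    push_neg at h
    have h1 : |x.1 - q.1| = 0 := le_antisymm h.1 (abs_nonneg _)
    have h2 : |x.2 - q.2| = 0 := le_antisymm h.2 (abs_nonneg _)
    simp [taxi, h1, h2] at hb
  rcases hc with hc | hc
  · set ε : ℝ := min (δ/2) |x.1 - q.1| with hε
    have hε0 : 0 < ε := lt_min (by linarith) hc
    have hεδ : ε < δ := lt_of_le_of_lt (min_le_left _ _) (by linarith)
    obtain ⟨w, hw1, hw2, hw3⟩ := step x.1 q.1 ε hε0 (min_le_right _ _)
    refine ⟨(w, x.2), ?_, ?_⟩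
    · rw [Prod.dist_eq]
      exact max_lt (by rw [Real.dist_eq]; simp only []; rw [hw1]; exact hεδ) (by simpa using hδ)
    · have e1 : taxi (w, x.2) q = taxi x q - ε := by
        simp only [taxi]; rw [hw2]; ring
      have e2 : taxi (w, x.2) p ≤ taxi x p + ε := by
        simp only [taxi]
        have := hw3 p.1
        linarith
      nlinarith [taxi_nonneg (w, x.2) p, taxi_nonneg (w, x.2) q,
        taxi_nonneg x p, taxi_nonneg x q]
  · set ε : ℝ := min (δ/2) |x.2 - q.2| with hε
    have hε0 : 0 < ε := lt_min (by linarith) hc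
    have hεδ : ε < δ := lt_of_le_of_lt (min_le_left _ _) (by linarith)
    obtain ⟨w, hw1, hw2, hw3⟩ := step x.2 q.2 ε hε0 (min_le_right _ _)
    refine ⟨(x.1, w), ?_, ?_⟩
    · rw [Prod.dist_eq]
      exact max_lt (by simpa using hδ) (by rw [Real.dist_eq]; simp only []; rw [hw1]; exact hεδ)
    · have e1 : taxi (x.1, w) q = taxi x q - ε := by
        simp only [taxi]; rw [hw2]; ring
      have e2 : taxi (x.1, w) p ≤ taxi x p + ε := by
        simp only [taxi]
        have := hw3 p.2
        linarith
      nlinarith [taxi_nonneg (x.1, w) p, taxi_nonneg (x.1, w) q,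
        taxi_nonneg x p, taxi_nonneg x q]

theorem boundary_L_eq_K (p q : ℝ × ℝ) (r : ℝ) (hr : 0 < r) :
    frontier (Lset p q r) = Kset p q r := by
  have hcont : Continuous fun x : ℝ × ℝ => taxi x p * taxi x q := by
    unfold taxi; fun_prop
  have hopen : IsOpen (Lset p q r) := isOpen_lt hcont continuous_const
  apply Set.Subset.antisymm
  · exact frontier_lt_subset_eq hcont continuous_const
  · intro x hx
    have hx' : taxi x p * taxi x q = r ^ 2 := hx
    have hnL : x ∉ Lset p q r := by simp [Lset, hx']
    rw [hopen.frontier_eq]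
    refine ⟨?_, hnL⟩
    rw [Metric.mem_closure_iff]
    intro δ hδ
    have hprod : 0 < taxi x p * taxi x q := hx' ▸ pow_pos hr 2
    have hp0 : 0 < taxi x p := by nlinarith [taxi_nonneg x p, taxi_nonneg x q]
    have hq0 : 0 < taxi x q := by nlinarith [taxi_nonneg x p, taxi_nonneg x q]
    rcases le_total (taxi x q) (taxi x p) with h | h
    · obtain ⟨y, hy1, hy2⟩ := key p q x h hq0 δ hδ
      exact ⟨y, by simpa [Lset, hx'] using hy2.trans_eq hx', hy1⟩
    · obtain ⟨y, hy1, hy2⟩ := key q p x h hp0 δ hδ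
      refine ⟨y, ?_, hy1⟩
      have : taxi y p * taxi y q < r ^ 2 := by
        rw [mul_comm]
        calc taxi y q * taxi y p < taxi x q * taxi x p := hy2
          _ = r ^ 2 := by rw [mul_comm]; exact hx'
      exact this
end

section
/- Let p, q ∈ ℝ², r ≥ 0, and let g⁺ and g⁻ be the guide complements of p and q (g⁺ is the intersection of the slope-1 guide line through p with the slope-(-1) guide line through q; g⁻ is the intersection of the slope-(-1) guide line through p with the slope-1 guide line through q). Then L(p,q;r) = [L(p,g⁺;r) ∩ L(p,g⁻;r)] ∪ [L(q,g⁺;r) ∩ L(q,g⁻;r)], where L(a,b;r) = {x : d(x,a)·d(x,b) < r²} with d the taxicab distance. -/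
lemma abs_add_abs_eq_max (u v : ℝ) : |u| + |v| = max |u + v| |u - v| := by
  rcases abs_cases u with ⟨hu, _⟩ | ⟨hu, _⟩ <;>
  rcases abs_cases v with ⟨hv, _⟩ | ⟨hv, _⟩ <;>
  rcases abs_cases (u + v) with ⟨h1, _⟩ | ⟨h1, _⟩ <;>
  rcases abs_cases (u - v) with ⟨h2, _⟩ | ⟨h2, _⟩ <;>
  rcases max_cases |u + v| |u - v| with ⟨h3, _⟩ | ⟨h3, _⟩ <;> linarith

lemma taxi_eq (x a : ℝ × ℝ) :
    taxi x a = max |(x.1 + x.2) - (a.1 + a.2)| |(x.1 - x.2) - (a.1 - a.2)| := by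
  unfold taxi
  rw [abs_add_abs_eq_max]
  congr 2 <;> ring

lemma key_s5 (A B C D r : ℝ) (hA : 0 ≤ A) (hB : 0 ≤ B) (hC : 0 ≤ C) (hD : 0 ≤ D) :
    max A B * max C D < r ^ 2 ↔
      ((max A B * max C B < r ^ 2 ∧ max A B * max A D < r ^ 2) ∨
       (max C D * max C B < r ^ 2 ∧ max C D * max A D < r ^ 2)) := by
  have hAB : 0 ≤ max A B := le_trans hA (le_max_left _ _)
  have hCD : 0 ≤ max C D := le_trans hC (le_max_left _ _)
  constructor
  · intro h
    rcases le_total (max A B) (max C D) with hle | hle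
    · left
      have hCB : max C B ≤ max C D :=
        max_le (le_max_left _ _) (le_trans (le_trans (le_max_right A B) hle) le_rfl)
      have hAD : max A D ≤ max C D :=
        max_le (le_trans (le_trans (le_max_left A B) hle) le_rfl) (le_max_right _ _)
      constructor
      · calc max A B * max C B ≤ max A B * max C D := by
              exact mul_le_mul_of_nonneg_left hCB hAB
          _ < r ^ 2 := h
      · calc max A B * max A D ≤ max A B * max C D := by
              exact mul_le_mul_of_nonneg_left hAD hAB
          _ < r ^ 2 := h
    · right
      have hCB : max C B ≤ max A B :=
        max_le (le_trans (le_trans (le_max_left C D) hle) le_rfl) (le_max_right _ _)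
      have hAD : max A D ≤ max A B :=
        max_le (le_max_left _ _) (le_trans (le_trans (le_max_right C D) hle) le_rfl)
      constructor
      · calc max C D * max C B ≤ max C D * max A B := by
              exact mul_le_mul_of_nonneg_left hCB hCD
          _ = max A B * max C D := mul_comm _ _
          _ < r ^ 2 := h
      · calc max C D * max A D ≤ max C D * max A B := by
              exact mul_le_mul_of_nonneg_left hAD hCD
          _ = max A B * max C D := mul_comm _ _
          _ < r ^ 2 := h
  · rintro (⟨h1, h2⟩ | ⟨h1, h2⟩)
    · have : max C D ≤ max (max C B) (max A D) :=
        max_le (le_trans (le_max_left C B) (le_max_left _ _))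
               (le_trans (le_max_right A D) (le_max_right _ _))
      rcases le_total (max C B) (max A D) with hcase | hcase
      · rw [max_eq_right hcase] at this
        exact lt_of_le_of_lt (mul_le_mul_of_nonneg_left this hAB) h2
      · rw [max_eq_left hcase] at this
        exact lt_of_le_of_lt (mul_le_mul_of_nonneg_left this hAB) h1
    · have : max A B ≤ max (max C B) (max A D) :=
        max_le (le_trans (le_max_left A D) (le_max_right _ _))
               (le_trans (le_max_right C B) (le_max_left _ _))
      rcases le_total (max C B) (max A D) with hcase | hcase
      · rw [max_eq_right hcase] at this
        calc max A B * max C D ≤ max A D * max C D :=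
              mul_le_mul_of_nonneg_right this hCD
          _ = max C D * max A D := mul_comm _ _
          _ < r ^ 2 := h2
      · rw [max_eq_left hcase] at this
        calc max A B * max C D ≤ max C B * max C D :=
              mul_le_mul_of_nonneg_right this hCD
          _ = max C D * max C B := mul_comm _ _
          _ < r ^ 2 := h1

theorem union_of_intersections (p q : ℝ × ℝ) (r : ℝ) (hr : 0 ≤ r) :
    Lset p q r =
      (Lset p (gplus p q) r ∩ Lset p (gminus p q) r) ∪
      (Lset q (gplus p q) r ∩ Lset q (gminus p q) r) := by
  ext x
  simp only [Lset, Set.mem_setOf_eq, Set.mem_union, Set.mem_inter_iff]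
  set A := |(x.1 + x.2) - (p.1 + p.2)| with hA
  set B := |(x.1 - x.2) - (p.1 - p.2)| with hB
  set C := |(x.1 + x.2) - (q.1 + q.2)| with hC
  set D := |(x.1 - x.2) - (q.1 - q.2)| with hD
  have hp : taxi x p = max A B := taxi_eq x p
  have hq : taxi x q = max C D := taxi_eq x q
  have hgp : taxi x (gplus p q) = max C B := by
    rw [taxi_eq, hC, hB]
    unfold gplus
    congr 2 <;> dsimp <;> ring
  have hgm : taxi x (gminus p q) = max A D := by
    rw [taxi_eq, hA, hD]
    unfold gminus
    congr 2 <;> dsimp <;> ring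
  rw [hp, hq, hgp, hgm]
  exact key_s5 A B C D r (abs_nonneg _) (abs_nonneg _) (abs_nonneg _) (abs_nonneg _)
end

section
/- Let p, q ∈ ℝ², r ≥ 0, with guide complements g⁺, g⁻. Then [L(p,g⁺;r) ∩ L(q,g⁻;r)] ∪ [L(p,g⁻;r) ∩ L(q,g⁺;r)] = L(p,q;r) ∩ L(g⁺,g⁻;r). -/
set_option maxHeartbeats 2000000 in
lemma key_s10 (a b c d r2 : ℝ) (ha : 0 ≤ a) (hb : 0 ≤ b) (hc : 0 ≤ c) (hd : 0 ≤ d) :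
    ((max a b * max b c < r2 ∧ max c d * max d a < r2) ∨
      (max a b * max d a < r2 ∧ max c d * max b c < r2)) ↔
      (max a b * max c d < r2 ∧ max b c * max d a < r2) := by
  rcases max_cases a b with ⟨h1, h1'⟩ | ⟨h1, h1'⟩ <;>
    rcases max_cases b c with ⟨h2, h2'⟩ | ⟨h2, h2'⟩ <;>
    rcases max_cases c d with ⟨h3, h3'⟩ | ⟨h3, h3'⟩ <;>
    rcases max_cases d a with ⟨h4, h4'⟩ | ⟨h4, h4'⟩ <;>
    rw [h1, h2, h3, h4] <;>
    exact Iff.intro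
      (fun h => by
        rcases h with ⟨u, v⟩ | ⟨u, v⟩ <;> exact ⟨by nlinarith, by nlinarith⟩)
      (fun h => by
        obtain ⟨u, v⟩ := h
        first
        | exact Or.inl ⟨by nlinarith, by nlinarith⟩
        | exact Or.inr ⟨by nlinarith, by nlinarith⟩)

theorem mixed_union_inter_eq (p q : ℝ × ℝ) (r : ℝ) (hr : 0 ≤ r) :
    (Lset p (gplus p q) r ∩ Lset q (gminus p q) r) ∪
      (Lset p (gminus p q) r ∩ Lset q (gplus p q) r) =
      Lset p q r ∩ Lset (gplus p q) (gminus p q) r := by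
  ext x
  simp only [Lset, Set.mem_inter_iff, Set.mem_union, Set.mem_setOf_eq]
  have e1 : taxi x p = max |x.1 + x.2 - (p.1 + p.2)| |x.1 - x.2 - (p.1 - p.2)| := by
    rw [taxi, abs_add_abs_eq_max]; congr 1 <;> congr 1 <;> ring
  have e2 : taxi x (gplus p q)
      = max |x.1 - x.2 - (p.1 - p.2)| |x.1 + x.2 - (q.1 + q.2)| := by
    rw [taxi, abs_add_abs_eq_max, max_comm]; congr 1 <;> congr 1 <;> simp [gplus] <;> ring
  have e3 : taxi x q = max |x.1 + x.2 - (q.1 + q.2)| |x.1 - x.2 - (q.1 - q.2)| := by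
    rw [taxi, abs_add_abs_eq_max]; congr 1 <;> congr 1 <;> ring
  have e4 : taxi x (gminus p q)
      = max |x.1 - x.2 - (q.1 - q.2)| |x.1 + x.2 - (p.1 + p.2)| := by
    rw [taxi, abs_add_abs_eq_max, max_comm]; congr 1 <;> congr 1 <;> simp [gminus] <;> ring
  rw [e1, e2, e3, e4]
  exact key_s10 _ _ _ _ _ (abs_nonneg _) (abs_nonneg _) (abs_nonneg _) (abs_nonneg _)
end

section
/- Let p = (p₁,p₂) with p₁ ≥ p₂ ≥ 0 and q = -p, and let r ≥ 0. For x in the open quadrant x₁ > p₁, x₂ > p₂, the equation d(x,p)·d(x,q) = r² holds if and only if x₁ + x₂ = √((p₁+p₂)² + r²). -/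
theorem quadrant_eqn (p : ℝ × ℝ) (hp : p.1 ≥ p.2) (hp2 : p.2 ≥ 0) (r : ℝ) (hr : 0 ≤ r)
    (x : ℝ × ℝ) (hx1 : x.1 > p.1) (hx2 : x.2 > p.2) :
    taxi x p * taxi x (-p) = r ^ 2 ↔
      x.1 + x.2 = Real.sqrt ((p.1 + p.2) ^ 2 + r ^ 2) := by
  have h1 : |x.1 - p.1| = x.1 - p.1 := abs_of_pos (by linarith)
  have h2 : |x.2 - p.2| = x.2 - p.2 := abs_of_pos (by linarith)
  have h3 : |x.1 - (-p).1| = x.1 + p.1 := by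
    rw [Prod.fst_neg]; rw [sub_neg_eq_add]; exact abs_of_pos (by linarith)
  have h4 : |x.2 - (-p).2| = x.2 + p.2 := by
    rw [Prod.snd_neg]; rw [sub_neg_eq_add]; exact abs_of_pos (by linarith)
  unfold taxi
  rw [h1, h2, h3, h4]
  have hs : 0 ≤ x.1 + x.2 := by linarith
  rw [show (x.1 - p.1 + (x.2 - p.2)) * (x.1 + p.1 + (x.2 + p.2))
      = (x.1 + x.2) ^ 2 - (p.1 + p.2) ^ 2 by ring]
  constructor
  · intro h
    rw [show (p.1 + p.2) ^ 2 + r ^ 2 = (x.1 + x.2) ^ 2 by linarith]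
    exact (Real.sqrt_sq hs).symm
  · intro h
    have := Real.sq_sqrt (show (0:ℝ) ≤ (p.1 + p.2) ^ 2 + r ^ 2 by positivity)
    rw [h]; linarith
end

section
/- Let p = (p₁,p₂) with p₁ ≥ p₂ ≥ 0 and q = -p, and let 0 ≤ r. For x with -p₁ < x₁ < p₁ and -p₂ < x₂ < p₂ (interior of the coordinate rectangle), d(x,p)·d(x,q) = r² holds if and only if (x₁+x₂)² = (p₁+p₂)² - r². In particular, if r > p₁+p₂ there is no such x in the open rectangle. -/
theorem rectangle_eqn (p : ℝ × ℝ) (hp : p.1 ≥ p.2) (hp2 : p.2 ≥ 0) (r : ℝ) (hr : 0 ≤ r) :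
    (∀ x : ℝ × ℝ, -p.1 < x.1 → x.1 < p.1 → -p.2 < x.2 → x.2 < p.2 →
      (taxi x p * taxi x (-p) = r ^ 2 ↔ (x.1 + x.2) ^ 2 = (p.1 + p.2) ^ 2 - r ^ 2)) ∧
    (r > p.1 + p.2 → ¬ ∃ x : ℝ × ℝ, -p.1 < x.1 ∧ x.1 < p.1 ∧ -p.2 < x.2 ∧ x.2 < p.2 ∧
      taxi x p * taxi x (-p) = r ^ 2) := by
  have key : ∀ x : ℝ × ℝ, -p.1 < x.1 → x.1 < p.1 → -p.2 < x.2 → x.2 < p.2 →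
      taxi x p * taxi x (-p) = (p.1 + p.2) ^ 2 - (x.1 + x.2) ^ 2 := by
    intro x h1 h2 h3 h4
    have e1 : |x.1 - p.1| = p.1 - x.1 := by rw [abs_of_nonpos] <;> linarith
    have e2 : |x.2 - p.2| = p.2 - x.2 := by rw [abs_of_nonpos] <;> linarith
    have e3 : |x.1 - (-p).1| = x.1 + p.1 := by
      rw [abs_of_nonneg] <;> simp <;> linarith
    have e4 : |x.2 - (-p).2| = x.2 + p.2 := by
      rw [abs_of_nonneg] <;> simp <;> linarith
    simp only [taxi, e1, e2, e3, e4]; ring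
  constructor
  · intro x h1 h2 h3 h4
    rw [key x h1 h2 h3 h4]
    constructor <;> intro h <;> linarith
  · rintro hrp ⟨x, h1, h2, h3, h4, h5⟩
    rw [key x h1 h2 h3 h4] at h5
    have : (x.1 + x.2) ^ 2 ≥ 0 := sq_nonneg _
    nlinarith [sq_nonneg (x.1 + x.2), sq_nonneg (p.1 + p.2 - r)]
end

section
/- Let p = (p₁,p₂) with p₁ > p₂ ≥ 0 and q = -p, and let r ≥ 0. For x in the open half-strip x₁ > p₁, -p₂ < x₂ < p₂, the equation d(x,p)·d(x,q) = r² holds if and only if (x₁ + p₂)² - (x₂ + p₁)² = r², i.e., x lies on a Euclidean hyperbola centered at (-p₂,-p₁) with asymptotes of slope ±1. -/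
theorem halfstrip_eqn (p : ℝ × ℝ) (hp : p.1 > p.2) (hp2 : p.2 ≥ 0) (r : ℝ) (hr : 0 ≤ r)
    (x : ℝ × ℝ) (hx1 : x.1 > p.1) (hx2 : -p.2 < x.2) (hx3 : x.2 < p.2) :
    taxi x p * taxi x (-p) = r ^ 2 ↔
      (x.1 + p.2) ^ 2 - (x.2 + p.1) ^ 2 = r ^ 2 := by
  unfold taxi
  have h1 : |x.1 - p.1| = x.1 - p.1 := abs_of_pos (by linarith)
  have h2 : |x.2 - p.2| = -(x.2 - p.2) := abs_of_neg (by linarith)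
  have h3 : |x.1 - (-p).1| = x.1 + p.1 := by
    rw [Prod.fst_neg]; rw [abs_of_pos (by simp; linarith)]; ring
  have h4 : |x.2 - (-p).2| = x.2 + p.2 := by
    rw [Prod.snd_neg]; rw [abs_of_pos (by simp; linarith)]; ring
  rw [h1, h2, h3, h4]
  constructor <;> intro h <;> nlinarith [h]
end
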